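/- arXiv:2304.02316 — 2 statements merged into one kernel-verified Lean document; each statement's English description precedes it below -/
import Mathlib

section
/- Let D be the set of all communication graphs on Π that are transitively closed and unilaterally connected, and let K be any pure chromatic (n−1)-dimensional simplicial complex properly colored by Π. Then P(K) = Ch(K); that is, for every facet F of K, the protocol complex P(F) for D equals the standard chromatic subdivision Ch(F), and hence their unions over all facets of K coincide. -/
/-- A communication graph on the process set `Fin n`, given by its in-neighborhoods
`In p = {q : (q,p) is an edge}`; it contains all self-loops. -/
structure CommGraph (n : ℕ) where
  In : Fin n → Finset (Fin n)
  self_mem : ∀ p, p ∈ In p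

/-- `Edge G a b` iff there is a directed edge from `a` to `b`, i.e. `a ∈ In^G(b)`. -/
def CommGraph.Edge {n : ℕ} (G : CommGraph n) (a b : Fin n) : Prop := a ∈ G.In b

/-- `G` is transitively closed. -/
def TransClosed {n : ℕ} (G : CommGraph n) : Prop :=
  ∀ a b c : Fin n, G.Edge a b → G.Edge b c → G.Edge a c

/-- `G` is unilaterally connected: for distinct `a`, `b` there is a directed path
from `a` to `b` or from `b` to `a`. -/
def Unilateral {n : ℕ} (G : CommGraph n) : Prop :=
  ∀ a b : Fin n, a ≠ b →
    Relation.ReflTransGen G.Edge a b ∨ Relation.ReflTransGen G.Edge b a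

/-- `R` is a root component of `G`: a strongly connected component
with no incoming edges from outside it. -/
def IsRootComponent {n : ℕ} (G : CommGraph n) (R : Finset (Fin n)) : Prop :=
  R.Nonempty ∧
  (∀ a ∈ R, ∀ b ∈ R, Relation.ReflTransGen G.Edge a b) ∧
  (∀ a : Fin n, a ∉ R → ∀ b ∈ R, ¬ G.Edge a b) ∧
  (∀ R' : Finset (Fin n), R ⊆ R' →
    (∀ a ∈ R', ∀ b ∈ R', Relation.ReflTransGen G.Edge a b) → R' = R)

/-- `K` (a family of finsets of vertices) is an abstract simplicial complex:
faces are nonempty and the family is closed under nonempty subsets. -/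
def IsComplex {V : Type*} (K : Set (Finset V)) : Prop :=
  (∀ s ∈ K, s.Nonempty) ∧ ∀ s ∈ K, ∀ t : Finset V, t ⊆ s → t.Nonempty → t ∈ K

/-- `s` is a facet (inclusion-maximal face) of `K`. -/
def IsFacet {V : Type*} (K : Set (Finset V)) (s : Finset V) : Prop :=
  s ∈ K ∧ ∀ t ∈ K, s ⊆ t → s = t

/-- The coloring `χ` is proper on `K`: injective on every face. -/
def IsChromatic {n : ℕ} {V : Type*} (χ : V → Fin n) (K : Set (Finset V)) : Prop :=
  ∀ s ∈ K, Set.InjOn χ ↑s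

/-- `K` is pure of dimension `n-1`: every facet has `n` vertices. -/
def IsPure {V : Type*} (n : ℕ) (K : Set (Finset V)) : Prop :=
  ∀ s : Finset V, IsFacet K s → s.card = n

/-- `F|_S`: the face of `F` consisting of the vertices whose color lies in `S`. -/
def restrict {n : ℕ} {V : Type*} (χ : V → Fin n) (F : Finset V) (S : Finset (Fin n)) :
    Finset V :=
  F.filter (fun v => χ v ∈ S)

/-- The facet of the protocol complex generated from the facet `F` by the
communication graph `G`: `{(p, F|_{In^G(p)}) : p ∈ Π}`. -/
def facetOf {n : ℕ} {V : Type*} [DecidableEq V] (χ : V → Fin n) (F : Finset V)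
    (G : CommGraph n) : Finset (Fin n × Finset V) :=
  Finset.univ.image (fun p => (p, restrict χ F (G.In p)))

/-- The complex generated by a set `M` of facets: all nonempty subsets of members of `M`. -/
def facesOf {W : Type*} (M : Set (Finset W)) : Set (Finset W) :=
  {s | s.Nonempty ∧ ∃ t ∈ M, s ⊆ t}

/-- The protocol complex `P(F)` for the message adversary `D` applied to the facet `F`:
one facet per graph `G ∈ D`, together with all nonempty subsets as faces. -/
def proto {n : ℕ} {V : Type*} [DecidableEq V] (D : Set (CommGraph n)) (χ : V → Fin n)
    (F : Finset V) : Set (Finset (Fin n × Finset V)) :=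
  facesOf {t | ∃ G ∈ D, t = facetOf χ F G}

/-- Facets of the standard chromatic subdivision of the simplex `F`. -/
def chFacets {n : ℕ} {V : Type*} [DecidableEq V] (χ : V → Fin n) (F : Finset V) :
    Set (Finset (Fin n × Finset V)) :=
  {s | ∃ τ : Fin n → Finset V,
    (∀ i, τ i ⊆ F ∧ (τ i).Nonempty ∧ i ∈ (τ i).image χ) ∧
    (∃ π : Equiv.Perm (Fin n), ∀ i j : Fin n, i ≤ j → τ (π i) ⊆ τ (π j)) ∧
    (∀ i j : Fin n, i ∈ (τ j).image χ → τ i ⊆ τ j) ∧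
    s = Finset.univ.image (fun i => (i, τ i))}

/-- The standard chromatic subdivision `Ch(F)` as a complex (all faces). -/
def chSub {n : ℕ} {V : Type*} [DecidableEq V] (χ : V → Fin n) (F : Finset V) :
    Set (Finset (Fin n × Finset V)) :=
  facesOf (chFacets χ F)

/-- Facets of the communication pseudosphere `Ps(F)`. -/
def psFacets {n : ℕ} {V : Type*} [DecidableEq V] (χ : V → Fin n) (F : Finset V) :
    Set (Finset (Fin n × Finset V)) :=
  {s | ∃ τ : Fin n → Finset V,
    (∀ i, τ i ⊆ F ∧ (τ i).Nonempty ∧ i ∈ (τ i).image χ) ∧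
    s = Finset.univ.image (fun i => (i, τ i))}

/-- The communication pseudosphere `Ps(F)` as a complex (all faces). -/
def psFaces {n : ℕ} {V : Type*} [DecidableEq V] (χ : V → Fin n) (F : Finset V) :
    Set (Finset (Fin n × Finset V)) :=
  facesOf (psFacets χ F)

/-- `v = (p, τ)` is a vertex of `Ps(σ)`: `τ` is a nonempty face of `σ` with `p ∈ χ(τ)`. -/
def psVert {n : ℕ} {V : Type*} [DecidableEq V] (χ : V → Fin n) (σ : Finset V)
    (v : Fin n × Finset V) : Prop :=
  v.2 ⊆ σ ∧ v.2.Nonempty ∧ v.1 ∈ v.2.image χ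

/-- Heard-of sets of a sequence of communication graphs (rounds `1, 2, ...`):
`HO G 0 p = {p}` and `HO G (k+1) p = ⋃_{q ∈ In^{G (k+1)}(p)} HO G k q`. -/
def HO {n : ℕ} (G : ℕ → CommGraph n) : ℕ → Fin n → Finset (Fin n)
  | 0, p => {p}
  | (k+1), p => ((G (k+1)).In p).biUnion (fun q => HO G k q)

/-- The round-`k` view of process `p` under the graph sequence `G`, encoded as the set of
heard-of chains `[p, q_k, q_{k-1}, …]`; this encoding determines and is determined by the
usual recursive view `h_k(p) = {(q, h_{k-1}(q)) : q ∈ In^{G k}(p)}`. -/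
def chains {n : ℕ} (G : ℕ → CommGraph n) : ℕ → Fin n → Finset (List (Fin n))
  | 0, p => {[p]}
  | (k+1), p => ((G (k+1)).In p).biUnion (fun q => (chains G k q).image (List.cons p))

/-- The facet of the `r`-round uninterpreted protocol complex generated by the
graph sequence `G`: `{(p, h_r(p)) : p ∈ Π}`. -/
def facetAt {n : ℕ} (G : ℕ → CommGraph n) (r : ℕ) : Finset (Fin n × Finset (List (Fin n))) :=
  Finset.univ.image (fun p => (p, chains G r p))

/-- The set `∪h` of processes ever heard of in a view `h` (in chain encoding). -/
def HOs {n : ℕ} (h : Finset (List (Fin n))) : Finset (Fin n) :=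
  h.biUnion (fun l => l.toFinset)

/-- `G` is a length-`r` graph sequence of the oblivious message adversary `D`
(rounds `1, …, r`). -/
def InD {n : ℕ} (D : Set (CommGraph n)) (r : ℕ) (G : ℕ → CommGraph n) : Prop :=
  ∀ k : ℕ, 1 ≤ k → k ≤ r → G k ∈ D

/-- The border `Bd(P_r) = P^r(∂σ₀)` of the `r`-round protocol complex: faces of `P_r`
carried by a proper face of the input simplex, i.e. all of whose vertices ever heard
only from processes in a fixed proper subset of `Π`. -/
def Border {n : ℕ} (D : Set (CommGraph n)) (r : ℕ) :
    Set (Finset (Fin n × Finset (List (Fin n)))) :=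
  {s | s.Nonempty ∧ (∃ G : ℕ → CommGraph n, InD D r G ∧ s ⊆ facetAt G r) ∧
    ∃ C : Finset (Fin n), C ≠ Finset.univ ∧ ∀ v ∈ s, HOs v.2 ⊆ C}

/-- An `r`-round consensus decision for `D`: decision functions on round-`r` views
satisfying agreement and (strong) validity in every feasible `r`-round execution. -/
def ConsensusDecision {n : ℕ} (D : Set (CommGraph n)) (r : ℕ)
    (δ : Fin n → Finset (List (Fin n)) → Fin n) : Prop :=
  ∀ G : ℕ → CommGraph n, InD D r G →
    (∀ p q : Fin n, δ p (chains G r p) = δ q (chains G r q)) ∧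
    (∀ p : Fin n, δ p (chains G r p) ∈ HO G r p)

lemma image_restrict' {n : ℕ} {V : Type*} [DecidableEq V] (χ : V → Fin n) (F : Finset V)
    (hF : F.image χ = Finset.univ) (S : Finset (Fin n)) :
    (restrict χ F S).image χ = S := by
  ext i
  simp only [restrict, Finset.mem_image, Finset.mem_filter]
  constructor
  · rintro ⟨v, ⟨_, hS⟩, rfl⟩; exact hS
  · intro hi
    have : i ∈ F.image χ := hF ▸ Finset.mem_univ i
    obtain ⟨v, hv, rfl⟩ := Finset.mem_image.mp this
    exact ⟨v, ⟨hv, hi⟩, rfl⟩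

lemma restrict_image' {n : ℕ} {V : Type*} [DecidableEq V] (χ : V → Fin n) (F : Finset V)
    (hinj : Set.InjOn χ ↑F) (τ : Finset V) (hτ : τ ⊆ F) :
    restrict χ F (τ.image χ) = τ := by
  ext v
  simp only [restrict, Finset.mem_filter, Finset.mem_image]
  constructor
  · rintro ⟨hvF, w, hw, hwv⟩
    rwa [hinj (hτ hw) hvF hwv] at hw
  · intro hv; exact ⟨hτ hv, v, hv, rfl⟩

lemma restrict_mono' {n : ℕ} {V : Type*} [DecidableEq V] (χ : V → Fin n) (F : Finset V)
    {S T : Finset (Fin n)} (h : S ⊆ T) : restrict χ F S ⊆ restrict χ F T :=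
  Finset.filter_subset_filter _ (by intro v hv; exact hv) |>.trans (by
    intro v hv
    simp only [restrict, Finset.mem_filter] at *
    exact ⟨hv.1, h hv.2⟩)

lemma rtg_edge' {n : ℕ} {G : CommGraph n} (hT : TransClosed G) {a b : Fin n}
    (h : Relation.ReflTransGen G.Edge a b) : a = b ∨ G.Edge a b := by
  induction h with
  | refl => exact Or.inl rfl
  | tail _ e ih =>
      rcases ih with rfl | ih
      · exact Or.inr e
      · exact Or.inr (hT _ _ _ ih e)

lemma key_facets {n : ℕ} {V : Type*} [DecidableEq V] (χ : V → Fin n) (F : Finset V)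
    (hF : F.image χ = Finset.univ) (hinj : Set.InjOn χ ↑F) :
    {t | ∃ G ∈ {G : CommGraph n | TransClosed G ∧ Unilateral G}, t = facetOf χ F G}
      = chFacets χ F := by
  ext s
  constructor
  · rintro ⟨G, ⟨hT, hU⟩, rfl⟩
    set τ : Fin n → Finset V := fun p => restrict χ F (G.In p) with hτdef
    have himg : ∀ p, (τ p).image χ = G.In p := fun p => image_restrict' χ F hF (G.In p)
    have hIn : ∀ p q : Fin n, p ∈ G.In q → G.In p ⊆ G.In q := by
      intro p q hpq a ha
      exact hT a p q ha hpq
    have hchain : ∀ p q : Fin n, τ p ⊆ τ q ∨ τ q ⊆ τ p := by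
      intro p q
      rcases eq_or_ne p q with rfl | hne
      · exact Or.inl (subset_refl _)
      rcases hU p q hne with h | h
      · rcases rtg_edge' hT h with rfl | h
        · exact Or.inl (subset_refl _)
        · exact Or.inl (restrict_mono' χ F (hIn p q h))
      · rcases rtg_edge' hT h with rfl | h
        · exact Or.inl (subset_refl _)
        · exact Or.inr (restrict_mono' χ F (hIn q p h))
    refine ⟨τ, ?_, ?_, ?_, rfl⟩
    · intro i
      refine ⟨Finset.filter_subset _ _, ?_, ?_⟩
      · have : i ∈ F.image χ := hF ▸ Finset.mem_univ i
        obtain ⟨v, hv, rfl⟩ := Finset.mem_image.mp this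
        exact ⟨v, Finset.mem_filter.mpr ⟨hv, G.self_mem _⟩⟩
      · rw [himg i]; exact G.self_mem i
    · set f : Fin n → ℕ := fun i => (τ i).card with hfdef
      refine ⟨Tuple.sort f, fun i j hij => ?_⟩
      have hc : f (Tuple.sort f i) ≤ f (Tuple.sort f j) := Tuple.monotone_sort f hij
      rcases hchain (Tuple.sort f i) (Tuple.sort f j) with h | h
      · exact h
      · exact le_of_eq (Finset.eq_of_subset_of_card_le h hc).symm
    · intro i j hij
      rw [himg j] at hij
      exact restrict_mono' χ F (hIn i j hij)
  · rintro ⟨τ, h1, ⟨π, hπ⟩, h3, rfl⟩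
    refine ⟨⟨fun p => (τ p).image χ, fun p => (h1 p).2.2⟩, ⟨?_, ?_⟩, ?_⟩
    · intro a b c hab hbc
      exact Finset.image_subset_image (h3 b c hbc) hab
    · intro p q _
      have hp : p ∈ (τ p).image χ := (h1 p).2.2
      have hq : q ∈ (τ q).image χ := (h1 q).2.2
      rcases le_total (π.symm p) (π.symm q) with h | h
      · have := hπ _ _ h
        rw [π.apply_symm_apply, π.apply_symm_apply] at this
        exact Or.inl (Relation.ReflTransGen.single
          (Finset.image_subset_image this hp))
      · have := hπ _ _ h
        rw [π.apply_symm_apply, π.apply_symm_apply] at this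
        exact Or.inr (Relation.ReflTransGen.single
          (Finset.image_subset_image this hq))
    · unfold facetOf
      apply Finset.image_congr
      intro p _
      simp only
      rw [restrict_image' χ F hinj (τ p) (h1 p).1]

/-- for the message adversary of all transitively closed and unilaterally
connected graphs and any pure chromatic `(n-1)`-complex `K`, `P(F) = Ch(F)` for every
facet `F` of `K`, and hence `P(K) = Ch(K)` (the unions over all facets coincide). -/
theorem proto_eq_chromaticSubdivision
    {n : ℕ} (hn : 2 ≤ n) {V : Type*} [DecidableEq V]
    (K : Set (Finset V)) (χ : V → Fin n)
    (hK : IsComplex K) (hchr : IsChromatic χ K) (hpure : IsPure n K) :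
    (∀ F : Finset V, IsFacet K F →
      proto {G : CommGraph n | TransClosed G ∧ Unilateral G} χ F = chSub χ F) ∧
    (⋃ F ∈ {F : Finset V | IsFacet K F},
        proto {G : CommGraph n | TransClosed G ∧ Unilateral G} χ F) =
      ⋃ F ∈ {F : Finset V | IsFacet K F}, chSub χ F := by
  have h1 : ∀ F : Finset V, IsFacet K F →
      proto {G : CommGraph n | TransClosed G ∧ Unilateral G} χ F = chSub χ F := by
    intro F hFfacet
    have hFK : F ∈ K := hFfacet.1
    have hinj : Set.InjOn χ ↑F := hchr F hFK
    have hcard : F.card = n := hpure F hFfacet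
    have himg : F.image χ = Finset.univ := by
      apply Finset.eq_univ_of_card
      rw [Finset.card_image_of_injOn hinj, hcard, Fintype.card_fin]
    unfold proto chSub
    rw [key_facets χ F himg hinj]
  refine ⟨h1, ?_⟩
  exact Set.iUnion₂_congr fun F hF => h1 F hF
end

section
/- Let D be a message adversary all of whose graphs are rooted, let K be a pure chromatic (n−1)-complex properly colored by Π, and let F_1 ≠ F_2 be facets of K with F_{12} = F_1 ∩ F_2 ≠ ∅. Let G_1, G_2 ∈ D and let F_1′ ∈ P(F_1) and F_2′ ∈ P(F_2) be the facets generated by G_1 and G_2 respectively, with F_{12}′ = F_1′ ∩ F_2′ ≠ ∅. If some process p in the root component of G_1 has its vertex of F_1′ outside of F_{12}′ (i.e., (p, F_1|_{In^{G_1}(p)}) ∉ F_{12}′), then |V(F_{12}′)| < |V(F_{12})|; that is, the intersection strictly shrinks. -/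
lemma mem_facetOf {n : ℕ} {V : Type*} [DecidableEq V] (χ : V → Fin n) (F : Finset V)
    (G : CommGraph n) (v : Fin n × Finset V) :
    v ∈ facetOf χ F G ↔ v.2 = restrict χ F (G.In v.1) := by
  constructor
  · intro h
    simp only [facetOf, Finset.mem_image, Finset.mem_univ, true_and] at h
    obtain ⟨q, rfl⟩ := h
    rfl
  · intro h
    simp only [facetOf, Finset.mem_image, Finset.mem_univ, true_and]
    exact ⟨v.1, Prod.ext rfl h.symm⟩

lemma root_reaches {n : ℕ} (G : CommGraph n) (R : Finset (Fin n))
    (hR : IsRootComponent G R) (huniq : ∃! R', IsRootComponent G R')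
    (p : Fin n) (hp : p ∈ R) (q : Fin n) :
    Relation.ReflTransGen G.Edge p q := by
  classical
  set Reach : Fin n → Finset (Fin n) :=
    fun y => Finset.univ.filter (fun a => Relation.ReflTransGen G.Edge a y) with hReach
  have hmemReach : ∀ a y, a ∈ Reach y ↔ Relation.ReflTransGen G.Edge a y := by
    intro a y; simp [hReach]
  set U : Finset (Fin n) := Finset.univ.filter
    (fun a => Relation.ReflTransGen G.Edge a q) with hU
  have hqU : q ∈ U := Finset.mem_filter.mpr ⟨Finset.mem_univ q, Relation.ReflTransGen.refl⟩
  obtain ⟨x, hxU, hxmin⟩ := U.exists_min_image (fun y => (Reach y).card) ⟨q, hqU⟩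
  have hxq : Relation.ReflTransGen G.Edge x q := by simpa [hU] using hxU
  have hback : ∀ b ∈ Reach x, Relation.ReflTransGen G.Edge x b := by
    intro b hb
    have hbx : Relation.ReflTransGen G.Edge b x := (hmemReach b x).mp hb
    have hbU : b ∈ U := by simp only [hU, Finset.mem_filter, Finset.mem_univ, true_and]
                           exact hbx.trans hxq
    have hsub : Reach b ⊆ Reach x := by
      intro a ha
      exact (hmemReach a x).mpr (((hmemReach a b).mp ha).trans hbx)
    have heq : Reach b = Reach x :=
      Finset.eq_of_subset_of_card_le hsub (hxmin b hbU)
    have : x ∈ Reach b := heq ▸ ((hmemReach x x).mpr Relation.ReflTransGen.refl)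
    exact (hmemReach x b).mp this
  have hroot : IsRootComponent G (Reach x) := by
    refine ⟨⟨x, (hmemReach x x).mpr Relation.ReflTransGen.refl⟩, ?_, ?_, ?_⟩
    · intro a ha b hb
      exact ((hmemReach a x).mp ha).trans (hback b hb)
    · intro a haR b hb hab
      exact haR ((hmemReach a x).mpr
        ((Relation.ReflTransGen.single hab).trans ((hmemReach b x).mp hb)))
    · intro R' hsub hconn
      refine Finset.Subset.antisymm (fun c hc => ?_) hsub
      have hx' : x ∈ R' := hsub ((hmemReach x x).mpr Relation.ReflTransGen.refl)
      exact (hmemReach c x).mpr (hconn c hc x hx')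
  obtain ⟨R₀, _, hUniq⟩ := huniq
  have h1 : R = R₀ := hUniq R hR
  have h2 : Reach x = R₀ := hUniq _ hroot
  have hpx : Relation.ReflTransGen G.Edge p x :=
    (hmemReach p x).mp (by rw [h2, ← h1]; exact hp)
  exact hpx.trans hxq

lemma cross_edge {n : ℕ} (G : CommGraph n) (P : Fin n → Prop)
    {p q : Fin n} (h : Relation.ReflTransGen G.Edge p q) :
    ¬ P p → P q → ∃ a b, ¬ P a ∧ P b ∧ G.Edge a b := by
  induction h with
  | refl => intro hp hq; exact absurd hq hp
  | @tail c d hpc hcd ih =>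
      intro hp hq
      by_cases hc : P c
      · exact ih hp hc
      · exact ⟨c, d, hc, hq, hcd⟩


/-- let all graphs of `D` be rooted, `F₁ ≠ F₂` facets of a pure chromatic
`(n-1)`-complex with `F₁₂ = F₁ ∩ F₂ ≠ ∅`, and let `F₁' ∈ P(F₁)`, `F₂' ∈ P(F₂)` be the
facets generated by `G₁, G₂ ∈ D` with `F₁₂' = F₁' ∩ F₂' ≠ ∅`. If some process `p` in the
root component of `G₁` has its vertex of `F₁'` outside `F₁₂'`, then `|V(F₁₂')| < |V(F₁₂)|`. -/
theorem intersection_shrinks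
    {n : ℕ} (hn : 2 ≤ n) {V : Type*} [DecidableEq V]
    (D : Set (CommGraph n))
    (hrooted : ∀ G ∈ D, ∃! R : Finset (Fin n), IsRootComponent G R)
    (K : Set (Finset V)) (χ : V → Fin n)
    (hK : IsComplex K) (hchr : IsChromatic χ K) (hpure : IsPure n K)
    (F₁ F₂ : Finset V) (h₁ : IsFacet K F₁) (h₂ : IsFacet K F₂) (hne : F₁ ≠ F₂)
    (h₁₂ : (F₁ ∩ F₂).Nonempty)
    (G₁ G₂ : CommGraph n) (hG₁ : G₁ ∈ D) (hG₂ : G₂ ∈ D)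
    (h₁₂' : (facetOf χ F₁ G₁ ∩ facetOf χ F₂ G₂).Nonempty)
    (R : Finset (Fin n)) (hR : IsRootComponent G₁ R)
    (p : Fin n) (hp : p ∈ R)
    (hout : ((p, restrict χ F₁ (G₁.In p)) : Fin n × Finset V) ∉
      facetOf χ F₁ G₁ ∩ facetOf χ F₂ G₂) :
    (facetOf χ F₁ G₁ ∩ facetOf χ F₂ G₂).card < (F₁ ∩ F₂).card := by
  classical
  have hF₁K : F₁ ∈ K := h₁.1
  have hinj : Set.InjOn χ ↑F₁ := hchr F₁ hF₁K
  have hcard : F₁.card = n := hpure F₁ h₁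
  have himg : F₁.image χ = Finset.univ := by
    apply Finset.eq_univ_of_card
    rw [Finset.card_image_of_injOn hinj, hcard, Fintype.card_fin]
  have hsurj : ∀ c : Fin n, ∃ v, v ∈ F₁ ∧ χ v = c := by
    intro c
    have : c ∈ F₁.image χ := by rw [himg]; exact Finset.mem_univ c
    simpa [Finset.mem_image] using this
  choose vF hvF hvχ using hsurj
  have hvFinj : Function.Injective vF := by
    intro a b h
    rw [← hvχ a, ← hvχ b, h]
  set good : Finset (Fin n) := Finset.univ.filter
    (fun q => restrict χ F₁ (G₁.In q) = restrict χ F₂ (G₂.In q)) with hgooddef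
  have hgood_mem : ∀ q, q ∈ good ↔
      restrict χ F₁ (G₁.In q) = restrict χ F₂ (G₂.In q) := by
    intro q; simp [hgooddef]
  have hInter : facetOf χ F₁ G₁ ∩ facetOf χ F₂ G₂
      = good.image (fun q => (q, restrict χ F₁ (G₁.In q))) := by
    ext v
    rw [Finset.mem_inter, mem_facetOf, mem_facetOf, Finset.mem_image]
    constructor
    · rintro ⟨ha, hb⟩
      exact ⟨v.1, (hgood_mem v.1).mpr (by rw [← ha, hb]), Prod.ext rfl ha.symm⟩
    · rintro ⟨q, hq, rfl⟩
      exact ⟨rfl, (hgood_mem q).mp hq⟩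
  have hIcard : (facetOf χ F₁ G₁ ∩ facetOf χ F₂ G₂).card = good.card := by
    rw [hInter]
    exact Finset.card_image_of_injective good (fun a b h => (Prod.ext_iff.mp h).1)
  have hrsub : ∀ q ∈ good, restrict χ F₁ (G₁.In q) ⊆ F₁ ∩ F₂ := by
    intro q hq v hv
    rw [Finset.mem_inter]
    refine ⟨(Finset.mem_filter.mp hv).1, ?_⟩
    rw [(hgood_mem q).mp hq] at hv
    exact (Finset.mem_filter.mp hv).1
  have hkey : ∀ q ∈ good, ∀ a, a ∈ G₁.In q → vF a ∈ F₁ ∩ F₂ := by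
    intro q hq a ha
    apply hrsub q hq
    rw [restrict, Finset.mem_filter, hvχ a]
    exact ⟨hvF a, ha⟩
  have hpbad : p ∉ good := by
    intro hp'
    apply hout
    rw [hInter, Finset.mem_image]
    exact ⟨p, hp', rfl⟩
  obtain ⟨w, hw⟩ := h₁₂'
  rw [hInter, Finset.mem_image] at hw
  obtain ⟨q₀, hq₀, -⟩ := hw
  have hreach : Relation.ReflTransGen G₁.Edge p q₀ :=
    root_reaches G₁ R hR (hrooted G₁ hG₁) p hp q₀
  obtain ⟨a, b, hna, hbgood, hab⟩ :=
    cross_edge G₁ (fun q => q ∈ good) hreach hpbad hq₀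
  have hmem : vF a ∈ F₁ ∩ F₂ := hkey b hbgood a hab
  have hnotim : vF a ∉ good.image vF := by
    rw [Finset.mem_image]
    rintro ⟨q, hq, hq'⟩
    exact hna (hvFinj hq' ▸ hq)
  have himsub : good.image vF ⊆ F₁ ∩ F₂ := by
    intro v hv
    rw [Finset.mem_image] at hv
    obtain ⟨q, hq, rfl⟩ := hv
    exact hkey q hq q (G₁.self_mem q)
  have hss : good.image vF ⊂ F₁ ∩ F₂ :=
    ⟨himsub, fun h => hnotim (h hmem)⟩
  have := Finset.card_lt_card hss
  rwa [Finset.card_image_of_injective good hvFinj, ← hIcard] at this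
end
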